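/- arXiv:1808.03638 — 3 statements merged into one kernel-verified Lean document; each statement's English description precedes it below -/
import Mathlib

section
/- For formal power series in q (with |q|<1 interpreted as an identity of formal power series), the sum over n ≥ 0 of (1/(q;q)_∞ − 1/(q;q)_n) equals (1/(q;q)_∞) · Σ_{n≥1} q^n/(1−q^n). -/
open Finset PowerSeries

noncomputable section

/-- number of partitions of `n` -/
def pp (n : ℕ) : ℕ := Fintype.card (Nat.Partition n)

/-- number of partitions of `n` with exactly `m` parts -/
def pmn (m n : ℕ) : ℕ :=
  ((univ : Finset (Nat.Partition n)).filter fun l => l.parts.card = m).card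

/-- `p_2(n) = Σ_m m² p(m,n)` (parts count is at most `n`) -/
def p2 (n : ℕ) : ℕ := ∑ m ∈ range (n + 1), m ^ 2 * pmn m n

/-- rank = largest part − number of parts -/
def rank {n : ℕ} (l : Nat.Partition n) : ℤ := (l.parts.sup : ℤ) - l.parts.card

/-- number of partitions of `n` with rank `m` -/
def Nrank (m : ℤ) (n : ℕ) : ℕ :=
  ((univ : Finset (Nat.Partition n)).filter fun l => rank l = m).card

/-- second rank moment (rank of a partition of `n` lies in `[-n,n]`) -/
def N2 (n : ℕ) : ℤ := ∑ m ∈ Finset.Icc (-(n : ℤ)) n, m ^ 2 * Nrank m n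

/-- Andrews–Garvan crank -/
def crank {n : ℕ} (l : Nat.Partition n) : ℤ :=
  if l.parts.count 1 = 0 then (l.parts.sup : ℤ)
  else ((l.parts.filter fun a => l.parts.count 1 < a).card : ℤ) - l.parts.count 1

/-- number of partitions of `n` with crank `m`, with the usual convention for `n = 1` -/
def Mcrank (m : ℤ) (n : ℕ) : ℤ :=
  if n = 1 then (if m = 0 then -1 else if m = 1 ∨ m = -1 then 1 else 0)
  else (((univ : Finset (Nat.Partition n)).filter fun l => crank l = m).card : ℤ)

/-- second crank moment -/
def M2 (n : ℕ) : ℤ := ∑ m ∈ Finset.Icc (-(n : ℤ)) n, m ^ 2 * Mcrank m n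

def smallestPart {n : ℕ} (l : Nat.Partition n) : ℕ := sInf {a | a ∈ l.parts}

/-- total number of appearances of the smallest part in all partitions of `n` -/
def spt (n : ℕ) : ℕ := ∑ l : Nat.Partition n, l.parts.count (smallestPart l)

def d (n : ℕ) : ℕ := n.divisors.card
def sigma1 (n : ℕ) : ℕ := ∑ k ∈ n.divisors, k

/-- partitions of `n` into exactly `m` distinct parts -/
def bmn (m n : ℕ) : ℕ :=
  ((univ : Finset (Nat.Partition n)).filter fun l => l.parts.card = m ∧ l.parts.Nodup).card

/-- number of divisors of `m` that are ≤ N -/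
def g (m N : ℕ) : ℕ := (m.divisors.filter fun e => e ≤ N).card

/-- `p(k)` minus the number of partitions of `k` with all parts ≤ N -/
def f (k N : ℕ) : ℕ :=
  pp k - ((univ : Finset (Nat.Partition k)).filter fun l => ∀ a ∈ l.parts, a ≤ N).card

/-- `S(n) = Σ_{k,N≥1} f(k,N) g(n−k,N)`; terms vanish for `k > n` or `N ≥ k` -/
def S (n : ℕ) : ℕ := ∑ k ∈ Icc 1 n, ∑ N ∈ Icc 1 n, f k N * g (n - k) N

/-- `(q;q)_n` -/
def qPoch (n : ℕ) : PowerSeries ℚ := ∏ k ∈ Icc 1 n, (1 - X ^ k)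

/-- `(q;q)_∞`, defined coefficient-wise (coefficients of `q^N` stabilize for `(q;q)_M`, `M ≥ N`) -/
def qInf : PowerSeries ℚ := PowerSeries.mk fun N => coeff N (qPoch N)

/-- `(q^{n+1};q)_∞`, defined coefficient-wise -/
def tailProd (n : ℕ) : PowerSeries ℚ :=
  PowerSeries.mk fun N => coeff N (∏ k ∈ Icc (n + 1) N, (1 - X ^ k))

/-- sum `Σ_{n≥0} a n` of a family of power series with `coeff N (a n) = 0` for `n > N` -/
def seriesSum (a : ℕ → PowerSeries ℚ) : PowerSeries ℚ :=
  PowerSeries.mk fun N => ∑ n ∈ range (N + 1), coeff N (a n)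

/-- double sum `Σ_{n1,n2≥1} a n1 n2`, assuming `coeff N (a n1 n2) = 0` for `n1 + n2 > N` -/
def seriesSum2 (a : ℕ → ℕ → PowerSeries ℚ) : PowerSeries ℚ :=
  PowerSeries.mk fun N => ∑ n1 ∈ Icc 1 N, ∑ n2 ∈ Icc 1 N, coeff N (a n1 n2)

/-- `Σ_{n≥1} q^n/(1−q^n)`, the generating function of `d(n)` -/
def divSum : PowerSeries ℚ := seriesSum fun n => X ^ (n + 1) * (1 - X ^ (n + 1))⁻¹


/-!
Both sides are the generating function of `∑_{λ ⊢ N} ℓ(λ)`, the total number of parts of the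
partitions of `N`. Removing the first column of the Young diagram shows that `1/(q;q)_n` counts
partitions with at most `n` parts, so `1/(q;q)_∞ − 1/(q;q)_n` counts those with more than `n`
parts and the sum over `n` counts every `λ` exactly `ℓ(λ)` times. Removing one part `m` shows that
`q^m/(1 − q^m) · 1/(q;q)_∞` counts partitions weighted by the multiplicity of `m` in them, and the
sum over `m` again weighs every `λ` by `ℓ(λ)`.
-/

theorem Multiset.sum_map_sub_one_add_card {s : Multiset ℕ} (hs : ∀ a ∈ s, 0 < a) :
    (s.map (· - 1)).sum + s.card = s.sum := by
  calc (s.map (· - 1)).sum + s.card = (s.map fun a => a - 1 + 1).sum := by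
        simp [Multiset.sum_map_add]
    _ = s.sum := by
        rw [Multiset.map_congr rfl fun a ha => Nat.sub_add_cancel (hs a ha), Multiset.map_id']

namespace Nat.Partition

theorem card_parts_le {n : ℕ} (p : n.Partition) : p.parts.card ≤ n := by
  simpa [p.parts_sum] using Multiset.card_nsmul_le_sum (a := 1) fun _ hx => p.parts_pos hx

/-- Subtracting one from every part, i.e. removing the first column of the Young diagram. -/
def cardPartsEqEquiv (n k : ℕ) :
    {p : (n + k).Partition // p.parts.card = k} ≃ {q : n.Partition // q.parts.card ≤ k} where
  toFun p := ⟨ofSums n (p.1.parts.map (· - 1)) (by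
      have := Multiset.sum_map_sub_one_add_card fun _ ha => p.1.parts_pos ha
      rw [p.1.parts_sum, p.2] at this
      omega), by
    simpa [p.2] using Multiset.card_le_card (Multiset.filter_le (· ≠ 0) (p.1.parts.map (· - 1)))⟩
  invFun q := ⟨⟨q.1.parts.map (· + 1) + Multiset.replicate (k - q.1.parts.card) 1,
      fun hi => by
        simp only [Multiset.mem_add, Multiset.mem_map, Multiset.mem_replicate] at hi
        grind,
      by
        simp only [Multiset.sum_add, Multiset.sum_map_add, Multiset.map_id', q.1.parts_sum,
          Multiset.map_const', Multiset.sum_replicate, smul_eq_mul, mul_one]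
        omega⟩,
    by simpa using Nat.add_sub_cancel' q.2⟩
  left_inv := by
    rintro ⟨p, hp⟩
    refine Subtype.ext (Partition.ext ?_)
    set t := p.parts.map (· - 1)
    have ht : t.map (· + 1) = p.parts := by
      rw [Multiset.map_map]
      exact (Multiset.map_congr rfl fun a ha => Nat.sub_add_cancel (p.parts_pos ha)).trans
        (Multiset.map_id _)
    have hcard : (t.filter (· ≠ 0)).card + (t.filter (¬ · ≠ 0)).card = k := by
      rw [← Multiset.card_add, Multiset.filter_add_not, Multiset.card_map, hp]
    have hones : (t.filter (¬ · ≠ 0)).map (· + 1) =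
        Multiset.replicate (k - (t.filter (· ≠ 0)).card) 1 := by
      rw [Multiset.eq_replicate]
      refine ⟨by rw [Multiset.card_map]; omega, ?_⟩
      simp +contextual [Multiset.mem_filter]
    conv_rhs => rw [← ht, ← Multiset.filter_add_not (· ≠ 0) t, Multiset.map_add, hones]
    rfl
  right_inv := by
    rintro ⟨q, -⟩
    refine Subtype.ext (Partition.ext ?_)
    simp only [ofSums_parts, Multiset.map_add, Multiset.map_map, Function.comp_def,
      Nat.add_sub_cancel, Multiset.map_id', Multiset.map_replicate, Multiset.filter_add]
    rw [Multiset.filter_eq_self.mpr fun a ha => (q.parts_pos ha).ne',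
      Multiset.filter_eq_nil.mpr fun a ha => by simp [Multiset.eq_of_mem_replicate ha], add_zero]

theorem card_filter_card_parts_eq (n k : ℕ) :
    #{p : (n + k).Partition | p.parts.card = k} = #{q : n.Partition | q.parts.card ≤ k} := by
  simpa only [Fintype.card_subtype] using Fintype.card_congr (cardPartsEqEquiv n k)

theorem card_filter_card_parts_eq_of_lt {n k : ℕ} (h : n < k) :
    #{p : n.Partition | p.parts.card = k} = 0 :=
  Finset.card_eq_zero.mpr <| filter_eq_empty_iff.mpr fun p _ => (card_parts_le p).trans_lt h |>.ne

theorem card_filter_card_parts_le_zero (n : ℕ) :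
    #{p : n.Partition | p.parts.card ≤ 0} = if n = 0 then 1 else 0 := by
  split_ifs with h
  · subst h
    simp
  · refine Finset.card_eq_zero.mpr <| filter_eq_empty_iff.mpr fun p _ hp => h ?_
    rw [← p.parts_sum, Multiset.card_eq_zero.mp (Nat.le_zero.mp hp), Multiset.sum_zero]

theorem card_filter_card_parts_le_succ (n k : ℕ) :
    #{p : n.Partition | p.parts.card ≤ k + 1} =
      #{p : n.Partition | p.parts.card ≤ k} + #{p : n.Partition | p.parts.card = k + 1} := by
  simp_rw [Nat.le_succ_iff]
  rw [filter_or, card_union_of_disjoint (disjoint_filter.mpr fun _ _ h1 h2 => by omega)]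

theorem card_filter_card_parts_le_of_le {n k : ℕ} (h : n ≤ k) :
    #{p : n.Partition | p.parts.card ≤ k} = Fintype.card n.Partition := by
  rw [filter_true_of_mem fun p _ => (card_parts_le p).trans h, Finset.card_univ]

theorem sum_count_parts_of_lt {n m : ℕ} (h : n < m) : ∑ p : n.Partition, p.parts.count m = 0 :=
  sum_eq_zero fun p _ => Multiset.count_eq_zero.mpr fun hm => (p.le_of_mem_parts hm).not_gt h

theorem sum_count_parts {n m : ℕ} (hm : 0 < m) (h : m ≤ n) :
    ∑ p : n.Partition, p.parts.count m =
      Fintype.card (n - m).Partition + ∑ p : (n - m).Partition, p.parts.count m := by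
  calc ∑ p : n.Partition, p.parts.count m
      = ∑ p : {p : n.Partition // m ∈ p.parts}, p.1.parts.count m := by
        rw [← sum_filter_of_ne fun p _ hp => Multiset.count_ne_zero.mp hp]
        exact sum_subtype _ (by simp) _
    _ = ∑ p : (n - m).Partition, (p.parts.count m + 1) :=
        Fintype.sum_equiv (partitionWithPartEquiv hm h) _ _ fun p => by
          rw [partitionWithPartEquiv_apply_parts, Multiset.count_erase_self,
            Nat.sub_add_cancel (Multiset.one_le_count_iff_mem.mpr p.2)]
    _ = _ := by rw [sum_add_distrib, sum_const, Finset.card_univ, smul_eq_mul, mul_one, add_comm]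

theorem sum_card_filter_lt_card_parts (n : ℕ) :
    ∑ k ∈ range (n + 1), #{p : n.Partition | k < p.parts.card} =
      ∑ p : n.Partition, p.parts.card := by
  simp only [card_filter]
  rw [sum_comm]
  refine sum_congr rfl fun p _ => ?_
  rw [← card_filter]
  convert card_range p.parts.card using 2
  ext k
  have := card_parts_le p
  simp only [mem_filter, mem_range]
  omega

theorem sum_sum_count_parts (n : ℕ) :
    ∑ k ∈ range (n + 1), ∑ p : n.Partition, p.parts.count (k + 1) =
      ∑ p : n.Partition, p.parts.card := by
  rw [sum_comm]
  refine sum_congr rfl fun p _ => ?_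
  rw [← Multiset.sum_count_eq_card (s := range (n + 2))
      fun a ha => mem_range.mpr (by have := p.le_of_mem_parts ha; omega),
    sum_range_succ' (fun a => p.parts.count a),
    Multiset.count_eq_zero.mpr fun h => (p.parts_pos h).false, add_zero]

end Nat.Partition

theorem PowerSeries.inv_eq_of_mul_eq_one_left {k : Type*} [Field k] {φ ψ : k⟦X⟧}
    (h : φ * ψ = 1) : ψ⁻¹ = φ :=
  (inv_eq_iff_mul_eq_one (right_ne_zero_of_mul_eq_one (by rw [← map_mul, h, map_one]))).mpr h

theorem mul_seriesSum (f : ℚ⟦X⟧) {a : ℕ → ℚ⟦X⟧} (ha : ∀ n N, N < n → coeff N (a n) = 0) :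
    f * seriesSum a = seriesSum fun n => f * a n := by
  ext N
  simp only [seriesSum, coeff_mk, coeff_mul, mul_sum]
  rw [sum_comm]
  refine sum_congr rfl fun ij hij => sum_subset (range_subset_range.mpr ?_) fun n _ hn => ?_
  · have := Finset.HasAntidiagonal.antidiagonal.snd_le hij
    omega
  · rw [ha n ij.2 (by simpa using hn), mul_zero]

theorem qPoch_succ (n : ℕ) : qPoch (n + 1) = qPoch n * (1 - X ^ (n + 1)) :=
  prod_Icc_succ_top (by omega) _

theorem coeff_qPoch_of_le {i n : ℕ} (h : i ≤ n) : coeff i (qPoch n) = coeff i (qPoch i) := by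
  induction n, h using Nat.le_induction with
  | base => rfl
  | succ n hin ih =>
    rw [qPoch_succ, mul_sub, mul_one, map_sub, coeff_mul_X_pow', if_neg (by omega), sub_zero, ih]

theorem coeff_qInf_of_le {i n : ℕ} (h : i ≤ n) : coeff i qInf = coeff i (qPoch n) := by
  rw [qInf, coeff_mk, coeff_qPoch_of_le h]

def genFunCardPartsLE (k : ℕ) : ℚ⟦X⟧ :=
  PowerSeries.mk fun n => (#{p : n.Partition | p.parts.card ≤ k} : ℚ)

theorem genFunCardPartsLE_zero : genFunCardPartsLE 0 = 1 := by
  ext n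
  rw [genFunCardPartsLE, coeff_mk, Nat.Partition.card_filter_card_parts_le_zero, coeff_one]
  split_ifs <;> simp

theorem one_sub_X_pow_mul_genFunCardPartsLE_succ (k : ℕ) :
    (1 - X ^ (k + 1)) * genFunCardPartsLE (k + 1) = genFunCardPartsLE k := by
  ext n
  rw [sub_mul, one_mul, map_sub, coeff_X_pow_mul']
  simp only [genFunCardPartsLE, coeff_mk]
  rw [Nat.Partition.card_filter_card_parts_le_succ n]
  split_ifs with h
  · obtain ⟨m, rfl⟩ := Nat.exists_eq_add_of_le' h
    rw [Nat.add_sub_cancel, Nat.Partition.card_filter_card_parts_eq]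
    push_cast
    ring
  · rw [Nat.Partition.card_filter_card_parts_eq_of_lt (by omega)]
    simp

theorem qPoch_mul_genFunCardPartsLE (k : ℕ) : qPoch k * genFunCardPartsLE k = 1 := by
  induction k with
  | zero => simp [qPoch, genFunCardPartsLE_zero]
  | succ k ih => rw [qPoch_succ, mul_assoc, one_sub_X_pow_mul_genFunCardPartsLE_succ, ih]

theorem inv_qPoch (k : ℕ) : (qPoch k)⁻¹ = genFunCardPartsLE k :=
  inv_eq_of_mul_eq_one_left ((mul_comm _ _).trans (qPoch_mul_genFunCardPartsLE k))

theorem inv_qInf : qInf⁻¹ = PowerSeries.mk fun n => (pp n : ℚ) := by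
  refine inv_eq_of_mul_eq_one_left ?_
  ext N
  rw [mul_comm, coeff_mul, ← qPoch_mul_genFunCardPartsLE N, coeff_mul]
  refine sum_congr rfl fun ij hij => ?_
  rw [coeff_qInf_of_le (Finset.HasAntidiagonal.antidiagonal.fst_le hij), genFunCardPartsLE,
    coeff_mk, coeff_mk,
    Nat.Partition.card_filter_card_parts_le_of_le (Finset.HasAntidiagonal.antidiagonal.snd_le hij),
    pp]

def genFunCountParts (m : ℕ) : ℚ⟦X⟧ :=
  PowerSeries.mk fun n => ((∑ p : n.Partition, p.parts.count m : ℕ) : ℚ)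

theorem one_sub_X_pow_mul_genFunCountParts {m : ℕ} (hm : 0 < m) :
    (1 - X ^ m) * genFunCountParts m = X ^ m * qInf⁻¹ := by
  ext n
  rw [sub_mul, one_mul, map_sub, coeff_X_pow_mul', coeff_X_pow_mul', inv_qInf]
  simp only [genFunCountParts, coeff_mk]
  split_ifs with h
  · rw [Nat.Partition.sum_count_parts hm h, pp]
    push_cast
    ring
  · rw [Nat.Partition.sum_count_parts_of_lt (by omega)]
    simp

theorem inv_qInf_mul_X_pow_mul_inv_one_sub_X_pow {m : ℕ} (hm : 0 < m) :
    qInf⁻¹ * (X ^ m * (1 - X ^ m)⁻¹) = genFunCountParts m := by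
  rw [← mul_assoc, mul_comm qInf⁻¹, eq_comm, eq_mul_inv_iff_mul_eq (by simp [hm.ne']), mul_comm,
    one_sub_X_pow_mul_genFunCountParts hm]

theorem coeff_seriesSum_inv_qInf_sub_inv_qPoch (N : ℕ) :
    coeff N (seriesSum fun n => qInf⁻¹ - (qPoch n)⁻¹) = ∑ p : N.Partition, (p.parts.card : ℚ) := by
  simp only [seriesSum, coeff_mk, map_sub, inv_qInf, inv_qPoch, genFunCardPartsLE, pp]
  calc _ = ∑ n ∈ range (N + 1), (#{p : N.Partition | n < p.parts.card} : ℚ) := by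
        refine sum_congr rfl fun n _ => ?_
        rw [sub_eq_iff_eq_add', ← Nat.cast_add, ← Finset.card_univ,
          ← card_filter_add_card_filter_not fun p : N.Partition => p.parts.card ≤ n]
        simp only [not_le]
    _ = _ := by exact_mod_cast Nat.Partition.sum_card_filter_lt_card_parts N

theorem coeff_inv_qInf_mul_divSum (N : ℕ) :
    coeff N (qInf⁻¹ * divSum) = ∑ p : N.Partition, (p.parts.card : ℚ) := by
  rw [divSum, mul_seriesSum _ fun n N h => by rw [coeff_X_pow_mul', if_neg (by omega)]]
  simp only [seriesSum, coeff_mk, inv_qInf_mul_X_pow_mul_inv_one_sub_X_pow (Nat.succ_pos _),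
    genFunCountParts]
  exact_mod_cast Nat.Partition.sum_sum_count_parts N

/-- Σ_{n≥0} (1/(q;q)_∞ − 1/(q;q)_n) = (1/(q;q)_∞) Σ_{n≥1} q^n/(1−q^n) -/
theorem stmt0 : seriesSum (fun n => qInf⁻¹ - (qPoch n)⁻¹) = qInf⁻¹ * divSum := by
  ext N
  rw [coeff_seriesSum_inv_qInf_sub_inv_qPoch, coeff_inv_qInf_mul_divSum]
end
end

section
/- The number of divisors d(n) of a positive integer n equals the sum of the smallest parts of partitions of n into an odd number of distinct parts minus the sum of the smallest parts of partitions of n into an even number of distinct parts. -/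
open Finset PowerSeries

noncomputable section

/-!
Expanding `(q^a; q)_N = ∏_{a ≤ j < a + N} (1 - q^j)` shows that its coefficient of `q^n` is
`∑ (-1)^{#parts}` over the partitions of `n` into distinct parts from `[a, a + N)`. As the smallest
part `s` of a partition of `n` is the number of `t < n` with `t < s`, the difference in the theorem
equals `-∑_{t < n} [q^n] (q^{t+1}; q)_n`.

On the other hand `1 - (q^{t+1}; q)_N = ∑_{k < N} q^{t+1+k} (q^{t+1}; q)_k`, and the telescoping
identity `(1 - q^{k+1}) ∑_{t < M} q^t (q^{t+1}; q)_k = (q^M; q)_{k+1} ≡ 1 (mod q^M)` turns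
`∑_{t < n} (1 - (q^{t+1}; q)_n)` into `∑_{1 ≤ k ≤ n} q^k / (1 - q^k)` modulo `q^{n+1}`, whose
coefficient of `q^n` is `d(n)`.
-/

theorem PowerSeries.coeff_eq_of_X_pow_dvd_sub {R : Type*} [Ring R] {φ ψ : R⟦X⟧} {m N : ℕ}
    (h : X ^ N ∣ φ - ψ) (hm : m < N) : coeff m φ = coeff m ψ :=
  sub_eq_zero.1 (map_sub (coeff m) φ ψ ▸ X_pow_dvd_iff.1 h m hm)

theorem Finset.sum_filter_odd_sub_sum_filter_even {ι R : Type*} [Ring R] (s : Finset ι)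
    (c : ι → ℕ) (f : ι → R) :
    ∑ i ∈ s with Odd (c i), f i - ∑ i ∈ s with Even (c i), f i = -∑ i ∈ s, (-1) ^ c i * f i := by
  rw [sum_filter, sum_filter, ← sum_sub_distrib, ← sum_neg_distrib]
  refine sum_congr rfl fun i _ => ?_
  rcases Nat.even_or_odd (c i) with h | h
  · simp [h, h.neg_one_pow, Nat.not_odd_iff_even.2 h]
  · simp [h, h.neg_one_pow, Nat.not_even_iff_odd.2 h]

section QPochhammer

variable {R : Type*} [CommRing R]

theorem PowerSeries.coeff_prod_one_sub_X_pow (s : Finset ℕ) (m : ℕ) :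
    coeff m (∏ j ∈ s, (1 - X ^ j) : R⟦X⟧) =
      ∑ T ∈ s.powerset with ∑ j ∈ T, j = m, (-1) ^ #T := by
  simp_rw [sub_eq_add_neg, prod_one_add, prod_neg, map_sum, sum_filter]
  refine sum_congr rfl fun T _ => ?_
  rw [prod_pow_eq_pow_sum T (fun j => j), ← map_one C, ← map_neg, ← map_pow, coeff_C_mul_X_pow]
  simp_rw [eq_comm]

-- `(q^a; q)_{b-a}` in q-Pochhammer notation
def qProd (a b : ℕ) : R⟦X⟧ := ∏ j ∈ Ico a b, (1 - X ^ j)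

theorem qProd_zero_left {b : ℕ} (hb : 0 < b) : (qProd 0 b : R⟦X⟧) = 0 :=
  prod_eq_zero (left_mem_Ico.2 hb) (by simp)

theorem qProd_succ_right {a b : ℕ} (hab : a ≤ b) :
    (qProd a (b + 1) : R⟦X⟧) = qProd a b * (1 - X ^ b) :=
  prod_Ico_succ_top hab _

theorem qProd_eq_mul_qProd_succ_left {a b : ℕ} (hab : a < b) :
    (qProd a b : R⟦X⟧) = (1 - X ^ a) * qProd (a + 1) b :=
  prod_eq_prod_Ico_succ_bot hab _

theorem X_pow_dvd_qProd_sub_one (a b : ℕ) : (X : R⟦X⟧) ^ a ∣ qProd a b - 1 := by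
  refine prod_induction _ (fun φ : R⟦X⟧ => X ^ a ∣ φ - 1) (fun φ ψ hφ hψ => ?_) (by simp)
    fun j hj => ?_
  · rw [show φ * ψ - 1 = (φ - 1) * ψ + (ψ - 1) by ring]
    exact dvd_add (dvd_mul_of_dvd_left hφ ψ) hψ
  · rw [sub_sub_cancel_left, dvd_neg]
    exact pow_dvd_pow X (mem_Ico.1 hj).1

theorem one_sub_qProd_eq_sum (a N : ℕ) :
    1 - (qProd a (a + N) : R⟦X⟧) = ∑ k ∈ range N, X ^ (a + k) * qProd a (a + k) := by
  have step : ∀ k, (qProd a (a + k) : R⟦X⟧) - qProd a (a + (k + 1)) =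
      X ^ (a + k) * qProd a (a + k) := fun k => by
    rw [← add_assoc, qProd_succ_right (Nat.le_add_right a k)]
    ring
  simp_rw [← step, sum_range_sub', add_zero, qProd, Ico_self, prod_empty]

theorem one_sub_X_pow_mul_sum_X_pow_mul_qProd (r M : ℕ) :
    (1 - X ^ (r + 1)) * ∑ t ∈ range M, X ^ t * (qProd (t + 1) (t + 1 + r) : R⟦X⟧) =
      qProd M (M + 1 + r) := by
  have step : ∀ t, (qProd (t + 1) (t + 1 + 1 + r) : R⟦X⟧) - qProd t (t + 1 + r) =
      (1 - X ^ (r + 1)) * (X ^ t * qProd (t + 1) (t + 1 + r)) := fun t => by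
    rw [show t + 1 + 1 + r = t + 1 + r + 1 by ring, qProd_succ_right (by omega),
      qProd_eq_mul_qProd_succ_left (a := t) (by omega)]
    ring
  rw [mul_sum, ← sum_congr rfl fun t _ => step t, sum_range_sub (fun t => qProd t (t + 1 + r)),
    qProd_zero_left (by omega), sub_zero]

def geomSeries (k : ℕ) : R⟦X⟧ := mk fun m => if k ∣ m then 1 else 0

theorem one_sub_X_pow_mul_geomSeries {k : ℕ} (hk : k ≠ 0) :
    (1 - X ^ k) * (geomSeries k : R⟦X⟧) = 1 := by
  ext m
  rw [sub_mul, one_mul, map_sub, coeff_X_pow_mul', coeff_one, geomSeries, coeff_mk]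
  rcases Nat.eq_zero_or_pos m with rfl | hm
  · simp [hk]
  by_cases hkm : k ≤ m
  · simp [hkm, hm.ne', Nat.dvd_sub_iff_left hkm dvd_rfl]
  · have hndvd : ¬ k ∣ m := fun h => hkm (Nat.le_of_dvd hm h)
    simp [hkm, hm.ne', hndvd]

theorem coeff_X_pow_mul_geomSeries {k n : ℕ} (hn : n ≠ 0) :
    coeff n (X ^ k * geomSeries k : R⟦X⟧) = if k ∣ n then 1 else 0 := by
  rw [coeff_X_pow_mul', geomSeries, coeff_mk]
  by_cases hkn : k ≤ n
  · simp [hkn, Nat.dvd_sub_iff_left hkn dvd_rfl]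
  · have hndvd : ¬ k ∣ n := fun h => hkn (Nat.le_of_dvd (Nat.pos_of_ne_zero hn) h)
    simp [hkn, hndvd]

theorem X_pow_dvd_sum_X_pow_mul_qProd_sub_geomSeries (r M : ℕ) :
    (X : R⟦X⟧) ^ M ∣ ∑ t ∈ range M, X ^ t * qProd (t + 1) (t + 1 + r) - geomSeries (r + 1) := by
  have hS := one_sub_X_pow_mul_sum_X_pow_mul_qProd (R := R) r M
  have hgeom := one_sub_X_pow_mul_geomSeries (R := R) (k := r + 1) (by omega)
  set S : R⟦X⟧ := ∑ t ∈ range M, X ^ t * qProd (t + 1) (t + 1 + r)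
  have : S - geomSeries (r + 1) = (qProd M (M + 1 + r) - 1) * geomSeries (r + 1) := by
    linear_combination geomSeries (r + 1) * hS - S * hgeom
  exact this ▸ dvd_mul_of_dvd_left (X_pow_dvd_qProd_sub_one M _) _

theorem sum_coeff_qProd_eq_neg_card_divisors {n : ℕ} (hn : n ≠ 0) :
    ∑ t ∈ range n, coeff n (qProd (t + 1) (t + 1 + n) : R⟦X⟧) = -#n.divisors := by
  have hsum : ∑ t ∈ range n, (1 - qProd (t + 1) (t + 1 + n) : R⟦X⟧) =
      ∑ k ∈ range n, X ^ (k + 1) * ∑ t ∈ range n, X ^ t * qProd (t + 1) (t + 1 + k) := by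
    simp_rw [one_sub_qProd_eq_sum, mul_sum]
    rw [sum_comm]
    refine sum_congr rfl fun k _ => sum_congr rfl fun t _ => ?_
    rw [show t + 1 + k = k + 1 + t by ring, pow_add, mul_assoc]
  have hcoeff : ∀ k, coeff n (X ^ (k + 1) *
      ∑ t ∈ range n, X ^ t * qProd (t + 1) (t + 1 + k) : R⟦X⟧) = if k + 1 ∣ n then 1 else 0 :=
    fun k => by
      rw [← coeff_X_pow_mul_geomSeries hn]
      refine coeff_eq_of_X_pow_dvd_sub ?_ (by omega : n < k + 1 + n)
      rw [← mul_sub, pow_add]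
      exact mul_dvd_mul_left _ (X_pow_dvd_sum_X_pow_mul_qProd_sub_geomSeries k n)
  have := congrArg (coeff n) hsum
  simp only [map_sum, hcoeff, map_sub, coeff_one, if_neg hn, zero_sub, sum_neg_distrib] at this
  rw [neg_eq_iff_eq_neg.1 this, ← Nat.filter_dvd_eq_divisors hn, ← sum_boole,
    Nat.succ_eq_add_one, sum_range_succ' _ n]
  simp [hn]

theorem smallestPart_eq_card {n : ℕ} (hn : n ≠ 0) (l : n.Partition) :
    smallestPart l = #{t ∈ range n | ∀ i ∈ l.parts, t < i} := by
  have hne : {a | a ∈ l.parts}.Nonempty := Multiset.exists_mem_of_ne_zero fun h =>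
    hn (by simpa [h] using l.parts_sum.symm)
  have hmem : smallestPart l ∈ l.parts := Nat.sInf_mem hne
  have : {t ∈ range n | ∀ i ∈ l.parts, t < i} = range (smallestPart l) := by
    ext t
    simp only [mem_filter, mem_range]
    have hle := l.le_of_mem_parts hmem
    exact ⟨fun h => h.2 _ hmem, fun h => ⟨by omega, fun i hi => h.trans_le (Nat.sInf_le hi)⟩⟩
  rw [this, card_range]

theorem coeff_qProd_eq_sum_distinct {a : ℕ} (ha : 0 < a) (b m : ℕ) :
    coeff m (qProd a b : R⟦X⟧) =
      ∑ l : m.Partition with l.parts.Nodup ∧ ∀ i ∈ l.parts, i ∈ Ico a b,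
        (-1) ^ Multiset.card l.parts := by
  rw [qProd, coeff_prod_one_sub_X_pow]
  symm
  refine sum_bij' (fun l hl => ⟨l.parts, (mem_filter.1 hl).2.1⟩)
    (fun T hT => ⟨T.val, fun hi => ha.trans_le (mem_Ico.1 (mem_powerset.1 (mem_filter.1 hT).1 hi)).1,
      by rw [← (mem_filter.1 hT).2, sum_eq_multiset_sum, Multiset.map_id']⟩) ?_ ?_ ?_ ?_ ?_
  · intro l hl
    obtain ⟨-, -, hparts⟩ := mem_filter.1 hl
    simp only [mem_filter, mem_powerset]
    refine ⟨fun i hi => hparts i hi, ?_⟩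
    rw [sum_eq_multiset_sum, Multiset.map_id']
    exact l.parts_sum
  · intro T hT
    exact mem_filter.2 ⟨mem_univ _, T.nodup, fun i hi => mem_powerset.1 (mem_filter.1 hT).1 hi⟩
  all_goals intros; rfl

theorem sum_distinct_neg_one_pow_card_mul_smallestPart {n : ℕ} (hn : n ≠ 0) :
    ∑ l : n.Partition with l.parts.Nodup, (-1) ^ Multiset.card l.parts * (smallestPart l : R) =
      ∑ t ∈ range n, coeff n (qProd (t + 1) (t + 1 + n) : R⟦X⟧) := by
  simp_rw [smallestPart_eq_card hn, ← sum_boole, mul_sum, mul_boole]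
  rw [sum_comm]
  refine sum_congr rfl fun t _ => ?_
  rw [← sum_filter, filter_filter, coeff_qProd_eq_sum_distinct t.succ_pos]
  refine sum_congr (filter_congr fun l _ => and_congr_right fun _ =>
    forall₂_congr fun i hi => ?_) fun _ _ => rfl
  have hle := l.le_of_mem_parts hi
  rw [mem_Ico]
  omega

end QPochhammer

/-- d(n) equals the sum of smallest parts over partitions of n into an odd number of
distinct parts minus that over partitions into an even number of distinct parts. -/
theorem stmt1 (n : ℕ) (hn : 0 < n) :
    (d n : ℤ) =
      (∑ l ∈ (univ : Finset (Nat.Partition n)).filter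
          (fun l => l.parts.Nodup ∧ Odd l.parts.card), (smallestPart l : ℤ)) -
      ∑ l ∈ (univ : Finset (Nat.Partition n)).filter
          (fun l => l.parts.Nodup ∧ Even l.parts.card), (smallestPart l : ℤ) := by
  rw [← filter_filter, ← filter_filter, sum_filter_odd_sub_sum_filter_even,
    sum_distinct_neg_one_pow_card_mul_smallestPart hn.ne',
    sum_coeff_qProd_eq_neg_card_divisors hn.ne', neg_neg, d]
end
end

section
/- For every positive integer n, with S(n) = Σ_{k,N≥1} f(k,N)·g(n−k,N), we have S(n) = p_2(n) − n·p(n) − N_2(n)/2. In particular S(n) ≥ 0. -/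
open Finset PowerSeries

noncomputable section

/-!
Write `A(λ)` for the largest part and `c(λ)` for the number of parts of `λ ⊢ n`, so that the rank
is `A − c`. Conjugation (transposing the Young diagram) swaps `A` and `c`, hence
`Σ A² = Σ c²` and `p₂(n) − N₂(n)/2 = Σ_λ A(λ) c(λ)`. It remains to show
`S(n) + n p(n) = Σ_λ A(λ) c(λ)`. Now `f(k,N)` counts the `μ ⊢ k` with a part larger than `N`,
and a divisor `e ≤ N` of `n − k = e t` turns `μ` into `μ ∪ {e^t} ⊢ n`: this is a bijection onto
the partitions of `n` with a part larger than `N` and at least `t` parts equal to `e`. Summing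
over `t` and over `e ≤ N < A(λ)` gives `S(n) = Σ_λ Σ_e (A(λ) − e) m_e(λ) = Σ_λ (A(λ) c(λ) − n)`.
-/

theorem Multiset.lt_sup_add_replicate_iff {α : Type*} [LinearOrder α] [OrderBot α]
    {s : Multiset α} {N e : α} (heN : e ≤ N) (t : ℕ) :
    N < (s + replicate t e).sup ↔ N < s.sup := by
  have : (replicate t e).sup ≤ N := sup_le.2 fun _ hb => (eq_of_mem_replicate hb).le.trans heN
  rw [sup_add, lt_sup_iff]
  exact or_iff_left this.not_gt

theorem sum_card_filter_le_eq_sum_ite {ι : Type*} [Fintype ι] (p : ι → Prop) [DecidablePred p]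
    (c : ι → ℕ) {n : ℕ} (hc : ∀ i, c i ≤ n) :
    ∑ t ∈ Icc 1 n, #{i | p i ∧ t ≤ c i} = ∑ i, if p i then c i else 0 := by
  simp only [card_filter]
  rw [sum_comm]
  refine sum_congr rfl fun i _ => ?_
  split_ifs with hp
  · have : (Icc 1 n).filter (· ≤ c i) = Icc 1 (c i) := by
      ext t; simp only [mem_filter, mem_Icc]; have := hc i; omega
    simp [hp, this]
  · simp [hp]

theorem sum_mul_card_fiber_eq_sum {ι α R : Type*} [Fintype ι] [DecidableEq α] [CommSemiring R]
    (φ : ι → α) {s : Finset α} (hφ : ∀ i, φ i ∈ s) (w : α → R) :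
    ∑ a ∈ s, w a * #{i | φ i = a} = ∑ i, w (φ i) := by
  rw [← sum_fiberwise_of_maps_to fun i _ => hφ i]
  refine sum_congr rfl fun a _ => ?_
  rw [sum_congr rfl fun i hi => by rw [(mem_filter.1 hi).2], sum_const, nsmul_eq_mul, mul_comm]

namespace YoungDiagram

theorem sum_rowLens (μ : YoungDiagram) : μ.rowLens.sum = μ.card := by
  have hrow : ∀ c ∈ μ.cells, c.1 ∈ Finset.range (μ.colLen 0) := fun c hc =>
    Finset.mem_range.2 <| (mem_iff_lt_colLen.1 hc).trans_le (μ.colLen_anti 0 c.2 (Nat.zero_le _))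
  rw [YoungDiagram.card, card_eq_sum_card_fiberwise hrow, rowLens,
    ← List.sum_toFinset _ List.nodup_range, List.toFinset_range]
  exact Finset.sum_congr rfl fun i _ => μ.rowLen_eq_card

theorem card_transpose (μ : YoungDiagram) : μ.transpose.card = μ.card := by
  simp [YoungDiagram.card, transpose]

theorem sup_rowLens (μ : YoungDiagram) : (μ.rowLens : Multiset ℕ).sup = μ.rowLen 0 := by
  refine le_antisymm (Multiset.sup_le.2 fun x hx => ?_) ?_
  · obtain ⟨i, -, rfl⟩ := List.mem_map.1 (Multiset.mem_coe.1 hx)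
    exact μ.rowLen_anti 0 i (Nat.zero_le _)
  · rcases Nat.eq_zero_or_pos (μ.rowLen 0) with h | h
    · exact h.le.trans (Nat.zero_le _)
    · refine Multiset.le_sup (Multiset.mem_coe.2 (List.mem_map_of_mem (List.mem_range.2 ?_)))
      exact mem_iff_lt_colLen.1 (mem_iff_lt_rowLen.2 h)

theorem eq_of_coe_rowLens_eq {μ ν : YoungDiagram}
    (h : (μ.rowLens : Multiset ℕ) = ν.rowLens) : μ = ν :=
  equivListRowLens.injective <| Subtype.ext <|
    (Multiset.coe_eq_coe.1 h).eq_of_sortedGE μ.rowLens_sorted ν.rowLens_sorted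

end YoungDiagram

namespace Nat.Partition

variable {n : ℕ}

theorem card_parts_le_s13 (l : n.Partition) : Multiset.card l.parts ≤ n := by
  simpa [l.parts_sum] using Multiset.card_nsmul_le_sum fun _ hx => l.parts_pos hx

theorem sup_parts_le (l : n.Partition) : l.parts.sup ≤ n :=
  Multiset.sup_le.2 fun _ => le_of_mem_parts

theorem mul_count_lt {l : n.Partition} {a e : ℕ} (ha : a ∈ l.parts) (hae : a ≠ e) :
    e * l.parts.count e < n := by
  have hsplit := congrArg Multiset.sum (Multiset.filter_add_not (· = e) l.parts)
  rw [Multiset.sum_add, Multiset.filter_eq', Multiset.sum_replicate, smul_eq_mul, l.parts_sum]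
    at hsplit
  have : a ≤ (l.parts.filter (¬ · = e)).sum :=
    Multiset.le_sum_of_mem (Multiset.mem_filter.2 ⟨ha, hae⟩)
  have := l.parts_pos ha
  rw [mul_comm]
  omega

def toYoungDiagram (l : n.Partition) : YoungDiagram :=
  YoungDiagram.equivListRowLens.symm
    ⟨l.parts.sort (· ≥ ·), (Multiset.pairwise_sort _ _).sortedGE,
      fun _ hx => l.parts_pos ((Multiset.mem_sort _).1 hx)⟩

theorem coe_rowLens_toYoungDiagram (l : n.Partition) :
    (l.toYoungDiagram.rowLens : Multiset ℕ) = l.parts := by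
  rw [toYoungDiagram, YoungDiagram.equivListRowLens_symm_apply,
    YoungDiagram.rowLens_ofRowLens_eq_self, Multiset.sort_eq]
  exact fun _ hx => l.parts_pos ((Multiset.mem_sort _).1 hx)

def conj (l : n.Partition) : n.Partition where
  parts := l.toYoungDiagram.transpose.rowLens
  parts_pos hx := YoungDiagram.pos_of_mem_rowLens _ _ hx
  parts_sum := by
    rw [Multiset.sum_coe, YoungDiagram.sum_rowLens, YoungDiagram.card_transpose,
      ← YoungDiagram.sum_rowLens, ← Multiset.sum_coe, coe_rowLens_toYoungDiagram, l.parts_sum]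

theorem toYoungDiagram_conj (l : n.Partition) :
    l.conj.toYoungDiagram = l.toYoungDiagram.transpose :=
  YoungDiagram.eq_of_coe_rowLens_eq (coe_rowLens_toYoungDiagram l.conj)

theorem conj_conj (l : n.Partition) : l.conj.conj = l := by
  ext1
  change ((l.conj.toYoungDiagram.transpose.rowLens : List ℕ) : Multiset ℕ) = l.parts
  rw [toYoungDiagram_conj, YoungDiagram.transpose_transpose, coe_rowLens_toYoungDiagram]

theorem sup_parts_conj (l : n.Partition) : l.conj.parts.sup = Multiset.card l.parts := by
  change ((l.toYoungDiagram.transpose.rowLens : List ℕ) : Multiset ℕ).sup = _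
  rw [YoungDiagram.sup_rowLens, YoungDiagram.rowLen_transpose, ← YoungDiagram.length_rowLens,
    ← Multiset.coe_card, coe_rowLens_toYoungDiagram]

theorem sum_comp_sup_parts_eq_sum_comp_card {M : Type*} [AddCommMonoid M] (F : ℕ → M) :
    ∑ l : n.Partition, F l.parts.sup = ∑ l : n.Partition, F (Multiset.card l.parts) :=
  (Fintype.sum_bijective conj (Function.Involutive.bijective conj_conj) _ _
    fun l => by rw [sup_parts_conj]).symm

-- The bijection adds `t` parts equal to `e`; as `e ≤ N`, this does not change whether the
-- largest part exceeds `N`.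
theorem card_lt_sup_eq_card_lt_sup_le_count {k N e t : ℕ} (he : 0 < e) (heN : e ≤ N)
    (hk : k + e * t = n) :
    #{μ : k.Partition | N < μ.parts.sup} =
      #{l : n.Partition | N < l.parts.sup ∧ t ≤ l.parts.count e} := by
  let r := Multiset.replicate t e
  have hr : r.sum = e * t := by simp [r, mul_comm]
  refine card_bij' (fun μ _ => ⟨μ.parts + r, ?_, ?_⟩) (fun l hl => ⟨l.parts - r, ?_, ?_⟩)
    ?_ ?_ ?_ ?_
  · intro i hi
    rcases Multiset.mem_add.1 hi with hi | hi
    · exact μ.parts_pos hi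
    · exact (Multiset.eq_of_mem_replicate hi).symm ▸ he
  · rw [Multiset.sum_add, μ.parts_sum, hr, hk]
  · exact fun hi => l.parts_pos (Multiset.mem_of_le tsub_le_self hi)
  · have hle : r ≤ l.parts := Multiset.le_count_iff_replicate_le.1 (mem_filter.1 hl).2.2
    have := congrArg Multiset.sum (tsub_add_cancel_of_le hle)
    rw [Multiset.sum_add, hr, l.parts_sum] at this
    omega
  · intro μ hμ
    simp only [mem_filter, mem_univ, true_and] at hμ ⊢
    refine ⟨(Multiset.lt_sup_add_replicate_iff heN t).2 hμ, ?_⟩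
    simp [r]
  · intro l hl
    have hle : r ≤ l.parts := Multiset.le_count_iff_replicate_le.1 (mem_filter.1 hl).2.2
    simp only [mem_filter, mem_univ, true_and] at hl ⊢
    rw [← Multiset.lt_sup_add_replicate_iff heN t]
    exact (tsub_add_cancel_of_le hle).symm ▸ hl.1
  · exact fun μ _ => Nat.Partition.ext (add_tsub_cancel_right _ _)
  · exact fun l hl => Nat.Partition.ext
      (tsub_add_cancel_of_le (Multiset.le_count_iff_replicate_le.1 (mem_filter.1 hl).2.2))

theorem sum_ite_lt_sup_count_add_eq_sup_mul_card (l : n.Partition) :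
    ∑ e ∈ Icc 1 n, ∑ N ∈ Icc e n, (if N < l.parts.sup then l.parts.count e else 0) + n =
      l.parts.sup * Multiset.card l.parts := by
  set A := l.parts.sup
  have hsub : l.parts.toFinset ⊆ Icc 1 n := fun a ha => by
    rw [Multiset.mem_toFinset] at ha
    exact mem_Icc.2 ⟨l.parts_pos ha, le_of_mem_parts ha⟩
  have hinner : ∀ e ∈ Icc 1 n,
      ∑ N ∈ Icc e n, (if N < A then l.parts.count e else 0) = (A - e) * l.parts.count e := by
    intro e _
    have : (Icc e n).filter (· < A) = Ico e A := by
      ext N; simp only [mem_filter, mem_Icc, mem_Ico]; have := l.sup_parts_le; omega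
    rw [← sum_filter, this, sum_const, Nat.card_Ico, smul_eq_mul]
  have hsum : ∑ e ∈ Icc 1 n, e * l.parts.count e = n := by
    simp_rw [mul_comm _ (l.parts.count _), ← smul_eq_mul,
      ← Finset.sum_multiset_count_of_subset l.parts _ hsub, l.parts_sum]
  have hcard : ∑ e ∈ Icc 1 n, l.parts.count e = Multiset.card l.parts :=
    Multiset.sum_count_eq_card fun a ha => hsub (Multiset.mem_toFinset.2 ha)
  calc ∑ e ∈ Icc 1 n, ∑ N ∈ Icc e n, (if N < A then l.parts.count e else 0) + n
      = ∑ e ∈ Icc 1 n, ((A - e) * l.parts.count e + e * l.parts.count e) := by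
        rw [sum_congr rfl hinner, sum_add_distrib, hsum]
    _ = ∑ e ∈ Icc 1 n, A * l.parts.count e := by
        refine sum_congr rfl fun e _ => ?_
        by_cases he : e ∈ l.parts
        · rw [← add_mul, Nat.sub_add_cancel (Multiset.le_sup he)]
        · simp [Multiset.count_eq_zero.2 he]
    _ = A * Multiset.card l.parts := by rw [← mul_sum, hcard]

end Nat.Partition

theorem f_eq_card_lt_sup (k N : ℕ) : f k N = #{μ : k.Partition | N < μ.parts.sup} := by
  have hcompl := card_filter_add_card_filter_not (s := (univ : Finset k.Partition))
    fun l => l.parts.sup ≤ N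
  simp only [not_le, card_univ] at hcompl
  simp only [f, pp, ← Multiset.sup_le]
  omega

theorem g_eq_sum_ite_mem_divisors (m N : ℕ) :
    g m N = ∑ e ∈ Icc 1 N, if e ∈ m.divisors then 1 else 0 := by
  rw [g, sum_boole, Nat.cast_id]
  congr 1
  ext e
  simp only [mem_filter, mem_Icc]
  exact ⟨fun ⟨hd, heN⟩ => ⟨⟨Nat.pos_of_mem_divisors hd, heN⟩, hd⟩,
    fun ⟨⟨_, heN⟩, hd⟩ => ⟨hd, heN⟩⟩

theorem sum_f_mul_ite_mem_divisors {n N e : ℕ} (he : 0 < e) (heN : e ≤ N) :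
    ∑ k ∈ Icc 1 n, f k N * (if e ∈ (n - k).divisors then 1 else 0) =
      ∑ l : n.Partition, if N < l.parts.sup then l.parts.count e else 0 := by
  rw [← sum_card_filter_le_eq_sum_ite (fun l : n.Partition => N < l.parts.sup)
    (fun l => l.parts.count e) fun l => (Multiset.count_le_card e l.parts).trans l.card_parts_le_s13]
  have hlt : ∀ t ∈ Icc 1 n, #{l : n.Partition | N < l.parts.sup ∧ t ≤ l.parts.count e} ≠ 0 →
      e * t < n := by
    intro t _ hne
    obtain ⟨l, hl⟩ := card_ne_zero.1 hne
    simp only [mem_filter, mem_univ, true_and] at hl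
    obtain ⟨a, ha, hNa⟩ : ∃ a ∈ l.parts, N < a := by
      by_contra! h
      exact hl.1.not_ge (Multiset.sup_le.2 h)
    exact (Nat.mul_le_mul_left e hl.2).trans_lt (l.mul_count_lt ha (by omega))
  simp only [mul_ite, mul_one, mul_zero]
  rw [← sum_filter, ← sum_filter_of_ne hlt]
  symm
  refine sum_nbij (fun t => n - e * t) ?_ ?_ ?_ fun t ht => ?_
  · intro t ht
    simp only [mem_filter, mem_Icc, Nat.mem_divisors] at ht ⊢
    rw [Nat.sub_sub_self ht.2.le]
    exact ⟨by omega, dvd_mul_right e t, (Nat.mul_pos he ht.1.1).ne'⟩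
  · intro t ht t' ht' h
    simp only [coe_filter, mem_Icc, Set.mem_ofPred_eq] at ht ht' h
    exact Nat.eq_of_mul_eq_mul_left he (by omega)
  · intro k hk
    simp only [coe_filter, mem_Icc, Nat.mem_divisors, Set.mem_ofPred_eq] at hk
    obtain ⟨t, ht⟩ := hk.2.1
    refine ⟨t, ?_, by simp only; omega⟩
    have ht0 : 0 < t := Nat.pos_of_ne_zero (by rintro rfl; omega)
    have := Nat.le_mul_of_pos_left t he
    simp only [coe_filter, mem_Icc, Set.mem_ofPred_eq]
    omega
  · rw [f_eq_card_lt_sup]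
    exact (Nat.Partition.card_lt_sup_eq_card_lt_sup_le_count he heN
      (by simp only [mem_filter] at ht; omega)).symm

theorem S_add_mul_pp (n : ℕ) :
    S n + n * pp n = ∑ l : n.Partition, l.parts.sup * Multiset.card l.parts := by
  have hS : S n = ∑ l : n.Partition, ∑ e ∈ Icc 1 n, ∑ N ∈ Icc e n,
      (if N < l.parts.sup then l.parts.count e else 0) := by
    calc S n = ∑ N ∈ Icc 1 n, ∑ e ∈ Icc 1 N, ∑ k ∈ Icc 1 n,
          f k N * (if e ∈ (n - k).divisors then 1 else 0) := by
          simp only [S, g_eq_sum_ite_mem_divisors, mul_sum]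
          rw [sum_comm]
          exact sum_congr rfl fun N _ => sum_comm
      _ = ∑ N ∈ Icc 1 n, ∑ e ∈ Icc 1 N, ∑ l : n.Partition,
          (if N < l.parts.sup then l.parts.count e else 0) :=
          sum_congr rfl fun N _ => sum_congr rfl fun e he => by
            rw [mem_Icc] at he
            exact sum_f_mul_ite_mem_divisors he.1 he.2
      _ = ∑ e ∈ Icc 1 n, ∑ N ∈ Icc e n, ∑ l : n.Partition,
          (if N < l.parts.sup then l.parts.count e else 0) :=
          sum_comm' fun N e => by simp only [mem_Icc]; omega
      _ = _ := by
          rw [← sum_comm]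
          exact sum_congr rfl fun e _ => sum_comm
  rw [hS, pp, ← card_univ, mul_comm, ← smul_eq_mul, ← sum_const, ← sum_add_distrib]
  exact sum_congr rfl fun l _ => l.sum_ite_lt_sup_count_add_eq_sup_mul_card

theorem p2_eq_sum_card_sq (n : ℕ) : p2 n = ∑ l : n.Partition, Multiset.card l.parts ^ 2 :=
  sum_mul_card_fiber_eq_sum _ (fun l => mem_range.2 (Nat.lt_succ_of_le l.card_parts_le_s13)) _

theorem N2_eq_sum_rank_sq (n : ℕ) : N2 n = ∑ l : n.Partition, rank l ^ 2 := by
  refine sum_mul_card_fiber_eq_sum _ (fun l => ?_) _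
  have := l.sup_parts_le
  have := l.card_parts_le_s13
  rw [mem_Icc, rank]
  omega

theorem stmt13_general (n : ℕ) :
    (S n : ℚ) = (p2 n : ℚ) - n * pp n - (N2 n : ℚ) / 2 ∧ 0 ≤ S n := by
  refine ⟨?_, Nat.zero_le _⟩
  have hS : (S n : ℚ) + n * pp n =
      ∑ l : n.Partition, (l.parts.sup : ℚ) * Multiset.card l.parts := by
    exact_mod_cast S_add_mul_pp n
  have hp2 : (p2 n : ℚ) = ∑ l : n.Partition, (Multiset.card l.parts : ℚ) ^ 2 := by
    exact_mod_cast p2_eq_sum_card_sq n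
  have hN2 : (N2 n : ℚ) =
      ∑ l : n.Partition, ((l.parts.sup : ℚ) - Multiset.card l.parts) ^ 2 := by
    rw [N2_eq_sum_rank_sq]; push_cast [rank]; rfl
  have hconj := Nat.Partition.sum_comp_sup_parts_eq_sum_comp_card (n := n) fun m => (m : ℚ) ^ 2
  simp only [sub_sq, mul_assoc, sum_add_distrib, sum_sub_distrib, ← mul_sum] at hN2
  linarith

/-- S(n) = p₂(n) − n p(n) − N₂(n)/2, and in particular S(n) ≥ 0. -/
theorem stmt13 (n : ℕ) (hn : 0 < n) :
    (S n : ℚ) = (p2 n : ℚ) - n * pp n - (N2 n : ℚ) / 2 ∧ 0 ≤ S n :=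
  stmt13_general n
end
end
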